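/- Let l ≥ 1 be a natural number, μ > 0, and let Y₁,…,Y_l be i.i.d. exponential random variables with rate μ. Then for every θ ∈ (0, μ), E[e^{θ · max_{i∈[1,l]} Y_i}] = ∏_{i=1}^{l} iμ/(iμ−θ). -/

import Mathlib

/-!
The maximum `M_n` of `n` independent `Exp(μ)` variables has distribution function
`(1 - e^{-μx})^n` on `[0, ∞)`, hence density `f_n(x) = nμ e^{-μx} (1 - e^{-μx})^{n-1}` there.
A direct computation shows that `e^{θx} f_{n+1}` has derivative
`(n+1)μ e^{θx} f_n - ((n+1)μ - θ) e^{θx} f_{n+1}`; as `e^{θx} f_{n+1}` vanishes at `0` (for `n ≥ 1`)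
and at `∞` (for `θ < μ`), integrating gives `((n+1)μ - θ) E[e^{θ M_{n+1}}] = (n+1)μ E[e^{θ M_n}]`.
Starting from `E[e^{θ M_1}] = μ/(μ - θ)`, this recursion builds up the product.
-/

open MeasureTheory ProbabilityTheory Real Finset Set Filter Topology

noncomputable def maxExpPDFReal (μ : ℝ) (n : ℕ) (x : ℝ) : ℝ :=
  n * μ * exp (-(μ * x)) * (1 - exp (-(μ * x))) ^ (n - 1)

noncomputable def maxExpMeasure (μ : ℝ) (n : ℕ) : Measure ℝ :=
  (volume.restrict (Ioi 0)).withDensity fun x ↦ ENNReal.ofReal (maxExpPDFReal μ n x)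

section Calculus

variable {μ θ x : ℝ}

lemma one_sub_exp_neg_mul_mem_Icc (hμ : 0 ≤ μ) (hx : 0 ≤ x) :
    1 - exp (-(μ * x)) ∈ Set.Icc 0 1 :=
  ⟨sub_nonneg.2 (exp_le_one_iff.2 (by nlinarith)), sub_le_self _ (exp_pos _).le⟩

lemma maxExpPDFReal_nonneg (hμ : 0 ≤ μ) (hx : 0 ≤ x) (n : ℕ) : 0 ≤ maxExpPDFReal μ n x := by
  have := (one_sub_exp_neg_mul_mem_Icc hμ hx).1
  unfold maxExpPDFReal
  positivity

@[fun_prop]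
lemma continuous_maxExpPDFReal (μ : ℝ) (n : ℕ) : Continuous (maxExpPDFReal μ n) := by
  unfold maxExpPDFReal
  fun_prop

lemma hasDerivAt_exp_neg_mul (μ x : ℝ) :
    HasDerivAt (fun y ↦ exp (-(μ * y))) (-μ * exp (-(μ * x))) x := by
  refine ((hasDerivAt_id' x).const_mul μ).neg.exp.congr_deriv ?_
  simp only [Pi.neg_apply]
  ring

lemma hasDerivAt_one_sub_exp_neg_mul_pow (μ x : ℝ) (n : ℕ) :
    HasDerivAt (fun y ↦ (1 - exp (-(μ * y))) ^ n) (maxExpPDFReal μ n x) x := by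
  refine (((hasDerivAt_exp_neg_mul μ x).const_sub 1).pow n).congr_deriv ?_
  rw [maxExpPDFReal]
  ring

lemma hasDerivAt_exp_mul_maxExpPDFReal (μ θ x : ℝ) (n : ℕ) :
    HasDerivAt (fun y ↦ exp (θ * y) * maxExpPDFReal μ (n + 2) y)
      ((n + 2 : ℕ) * μ * (exp (θ * x) * maxExpPDFReal μ (n + 1) x)
        - ((n + 2 : ℕ) * μ - θ) * (exp (θ * x) * maxExpPDFReal μ (n + 2) x)) x := by
  have hfun : (fun y ↦ exp (θ * y) * maxExpPDFReal μ (n + 2) y) = fun y ↦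
      (n + 2 : ℕ) * μ * (exp (θ * y) * exp (-(μ * y)) * (1 - exp (-(μ * y))) ^ (n + 1)) := by
    funext y; rw [maxExpPDFReal, show n + 2 - 1 = n + 1 from rfl]; ring
  rw [hfun]
  refine (((((hasDerivAt_id' x).const_mul θ).exp.mul (hasDerivAt_exp_neg_mul μ x)).mul
    (hasDerivAt_one_sub_exp_neg_mul_pow μ x (n + 1))).const_mul _).congr_deriv ?_
  simp only [maxExpPDFReal, Pi.mul_apply, Nat.add_sub_cancel, show n + 2 - 1 = n + 1 from rfl]
  push_cast
  ring

lemma exp_mul_maxExpPDFReal (μ θ x : ℝ) (n : ℕ) :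
    exp (θ * x) * maxExpPDFReal μ n x
      = n * μ * exp (-(μ - θ) * x) * (1 - exp (-(μ * x))) ^ (n - 1) := by
  rw [maxExpPDFReal, show -(μ - θ) * x = θ * x + -(μ * x) by ring, exp_add]
  ring

lemma exp_mul_maxExpPDFReal_le (hμ : 0 ≤ μ) (hx : 0 ≤ x) (n : ℕ) :
    exp (θ * x) * maxExpPDFReal μ n x ≤ n * μ * exp (-(μ - θ) * x) := by
  have hu := one_sub_exp_neg_mul_mem_Icc hμ hx
  rw [exp_mul_maxExpPDFReal]
  exact mul_le_of_le_one_right (by positivity) (pow_le_one₀ hu.1 hu.2)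

lemma integrableOn_exp_mul_maxExpPDFReal (hμ : 0 ≤ μ) (hθ : θ < μ) (n : ℕ) :
    IntegrableOn (fun x ↦ exp (θ * x) * maxExpPDFReal μ n x) (Ioi 0) := by
  refine ((exp_neg_integrableOn_Ioi 0 (sub_pos.2 hθ)).const_mul (n * μ)).mono'
    (by fun_prop) ?_
  filter_upwards [ae_restrict_mem measurableSet_Ioi] with x hx
  rw [norm_of_nonneg (mul_nonneg (exp_pos _).le (maxExpPDFReal_nonneg hμ hx.le n))]
  exact exp_mul_maxExpPDFReal_le hμ hx.le n

lemma tendsto_exp_mul_maxExpPDFReal_atTop (hμ : 0 ≤ μ) (hθ : θ < μ) (n : ℕ) :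
    Tendsto (fun x ↦ exp (θ * x) * maxExpPDFReal μ n x) atTop (𝓝 0) := by
  have hdecay : Tendsto (fun x ↦ n * μ * exp (-(μ - θ) * x)) atTop (𝓝 0) := by
    simpa using (tendsto_exp_atBot.comp
      (tendsto_id.const_mul_atTop_of_neg (by linarith : -(μ - θ) < 0))).const_mul (n * μ)
  refine squeeze_zero' ?_ ?_ hdecay
  · filter_upwards [eventually_ge_atTop 0] with x hx
    exact mul_nonneg (exp_pos _).le (maxExpPDFReal_nonneg hμ hx n)
  · filter_upwards [eventually_ge_atTop 0] with x hx
    exact exp_mul_maxExpPDFReal_le hμ hx n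

end Calculus

section Recursion

variable {μ θ : ℝ}

lemma integral_exp_mul_maxExpPDFReal_add_two (hμ : 0 ≤ μ) (hθ : θ < μ) (n : ℕ) :
    ((n + 2 : ℕ) * μ - θ) * ∫ x in Ioi 0, exp (θ * x) * maxExpPDFReal μ (n + 2) x
      = (n + 2 : ℕ) * μ * ∫ x in Ioi 0, exp (θ * x) * maxExpPDFReal μ (n + 1) x := by
  have hint₁ := (integrableOn_exp_mul_maxExpPDFReal hμ hθ (n + 1)).const_mul ((n + 2 : ℕ) * μ)
  have hint₂ := (integrableOn_exp_mul_maxExpPDFReal hμ hθ (n + 2)).const_mul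
    ((n + 2 : ℕ) * μ - θ)
  have h := integral_Ioi_of_hasDerivAt_of_tendsto'
    (fun x _ ↦ hasDerivAt_exp_mul_maxExpPDFReal μ θ x n) (hint₁.sub hint₂)
    (tendsto_exp_mul_maxExpPDFReal_atTop hμ hθ (n + 2))
  rw [integral_sub hint₁ hint₂, integral_const_mul, integral_const_mul] at h
  have h₀ : maxExpPDFReal μ (n + 2) 0 = 0 := by simp [maxExpPDFReal]
  rw [h₀, mul_zero, sub_zero] at h
  linarith

lemma integral_exp_mul_maxExpPDFReal (hμ : 0 ≤ μ) (hθ : θ < μ) (n : ℕ) :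
    ∫ x in Ioi 0, exp (θ * x) * maxExpPDFReal μ (n + 1) x
      = ∏ i ∈ Finset.Icc 1 (n + 1), (i * μ / (i * μ - θ)) := by
  induction n with
  | zero =>
    have hθμ : -(μ - θ) < 0 := by linarith
    simp only [exp_mul_maxExpPDFReal, zero_add, Nat.cast_one, one_mul, Nat.sub_self, pow_zero,
      mul_one, integral_const_mul, integral_exp_mul_Ioi hθμ, mul_zero, exp_zero,
      Finset.Icc_self, Finset.prod_singleton]
    field_simp
  | succ n ih =>
    have hpos : 0 < ((n + 2 : ℕ) : ℝ) * μ - θ := by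
      have : (0 : ℝ) ≤ (n + 1 : ℕ) * μ := by positivity
      push_cast at this ⊢; linarith
    have hrec := integral_exp_mul_maxExpPDFReal_add_two hμ hθ n
    rw [prod_Icc_succ_top (by omega), ← ih, show n + 1 + 1 = n + 2 from rfl, mul_div_assoc',
      eq_div_iff hpos.ne']
    linarith

end Recursion

lemma maxExpMeasure_Iic {μ : ℝ} (hμ : 0 < μ) {n : ℕ} (hn : n ≠ 0) (x : ℝ) :
    maxExpMeasure μ n (Iic x) = expMeasure μ (Iic x) ^ n := by
  have := isProbabilityMeasure_expMeasure hμ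
  rw [maxExpMeasure, withDensity_apply _ measurableSet_Iic,
    Measure.restrict_restrict measurableSet_Iic, Iic_inter_Ioi, ← ofReal_cdf,
    ← ENNReal.ofReal_pow (cdf_nonneg _ _), cdf_expMeasure_eq hμ]
  rcases le_or_gt x 0 with hx | hx
  · have hF : (if 0 ≤ x then 1 - exp (-(μ * x)) else 0) = 0 := by
      split_ifs with h
      · simp [le_antisymm hx h]
      · rfl
    simp [Ioc_eq_empty (not_lt.2 hx), hF, hn]
  · rw [if_pos hx.le, ← ofReal_integral_eq_lintegral_ofReal,
      ← intervalIntegral.integral_of_le hx.le,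
      intervalIntegral.integral_eq_sub_of_hasDerivAt
        (fun t _ ↦ hasDerivAt_one_sub_exp_neg_mul_pow μ t n)]
    · simp [hn]
    · exact (continuous_maxExpPDFReal μ n).intervalIntegrable 0 x
    · exact (continuous_maxExpPDFReal μ n).integrableOn_Ioc
    · filter_upwards [ae_restrict_mem measurableSet_Ioc] with t ht
      exact maxExpPDFReal_nonneg hμ.le ht.1.le n

lemma mgf_id_maxExpMeasure {μ θ : ℝ} (hμ : 0 ≤ μ) (hθ : θ < μ) {n : ℕ} (hn : n ≠ 0) :
    mgf id (maxExpMeasure μ n) θ = ∏ i ∈ Finset.Icc 1 n, (i * μ / (i * μ - θ)) := by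
  obtain ⟨n, rfl⟩ := Nat.exists_eq_succ_of_ne_zero hn
  rw [mgf, maxExpMeasure, integral_withDensity_eq_integral_toReal_smul (by fun_prop)
    (ae_of_all _ fun _ ↦ ENNReal.ofReal_lt_top), ← integral_exp_mul_maxExpPDFReal hμ hθ n]
  refine setIntegral_congr_fun measurableSet_Ioi fun x hx ↦ ?_
  simp [ENNReal.toReal_ofReal (maxExpPDFReal_nonneg hμ hx.le _), mul_comm]

lemma map_iSup_Iic_eq_prod {ι Ω : Type*} [Fintype ι] [Nonempty ι] [MeasurableSpace Ω]
    {P : Measure Ω} {Y : ι → Ω → ℝ} (hY : ∀ i, AEMeasurable (Y i) P) (hindep : iIndepFun Y P)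
    (x : ℝ) : P.map (fun ω ↦ ⨆ i, Y i ω) (Iic x) = ∏ i, P.map (Y i) (Iic x) := by
  have hpre : (fun ω ↦ ⨆ i, Y i ω) ⁻¹' Iic x = ⋂ i, Y i ⁻¹' Iic x := by
    ext ω
    simpa using ciSup_le_iff (finite_range fun i ↦ Y i ω).bddAbove
  rw [Measure.map_apply_of_aemeasurable (AEMeasurable.iSup hY) measurableSet_Iic, hpre,
    hindep.meas_iInter fun i ↦ ⟨Iic x, measurableSet_Iic, rfl⟩]
  exact Finset.prod_congr rfl fun i _ ↦
    (Measure.map_apply_of_aemeasurable (hY i) measurableSet_Iic).symm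

lemma map_iSup_eq_maxExpMeasure {ι Ω : Type*} [Fintype ι] [Nonempty ι] [MeasurableSpace Ω]
    {P : Measure Ω} [IsProbabilityMeasure P] {Y : ι → Ω → ℝ} {μ : ℝ} (hμ : 0 < μ)
    (hY : ∀ i, AEMeasurable (Y i) P) (hlaw : ∀ i, P.map (Y i) = expMeasure μ)
    (hindep : iIndepFun Y P) :
    P.map (fun ω ↦ ⨆ i, Y i ω) = maxExpMeasure μ (Fintype.card ι) := by
  have := Measure.isProbabilityMeasure_map (μ := P) (AEMeasurable.iSup hY)
  refine Measure.ext_of_Iic _ _ fun x ↦ ?_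
  rw [map_iSup_Iic_eq_prod hY hindep, maxExpMeasure_Iic hμ Fintype.card_ne_zero]
  simp [hlaw]

theorem mgf_max_of_iid_exponentials_general
    {Ω : Type*} [MeasurableSpace Ω] (P : Measure Ω) [IsProbabilityMeasure P]
    (l : ℕ) (hl : 1 ≤ l) (μ : ℝ) (hμ : 0 < μ)
    (Y : Fin l → Ω → ℝ)
    (hYlaw : ∀ i, Measure.map (Y i) P = expMeasure μ)
    (hindep : iIndepFun Y P)
    (θ : ℝ) (hθ : θ ∈ Set.Ioo 0 μ) :
    mgf (fun ω => ⨆ i, Y i ω) P θ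
      = ∏ i ∈ Finset.Icc 1 l, ((i : ℝ) * μ / ((i : ℝ) * μ - θ)) := by
  have := isProbabilityMeasure_expMeasure hμ
  have : Nonempty (Fin l) := ⟨⟨0, hl⟩⟩
  have hY : ∀ i, AEMeasurable (Y i) P := fun i ↦
    aemeasurable_of_map_neZero (by rw [hYlaw i]; infer_instance)
  rw [← mgf_id_map (AEMeasurable.iSup hY), map_iSup_eq_maxExpMeasure hμ hY hYlaw hindep,
    Fintype.card_fin]
  exact mgf_id_maxExpMeasure hμ.le hθ.2 (by omega)

/-- for `Y₁,…,Y_l` i.i.d. `Exp(μ)` and `θ ∈ (0, μ)`,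
`E[e^{θ·max_{i∈[1,l]} Y_i}] = ∏_{i=1}^{l} iμ/(iμ−θ)`. -/
theorem mgf_max_of_iid_exponentials
    {Ω : Type*} [MeasurableSpace Ω] (P : Measure Ω) [IsProbabilityMeasure P]
    (l : ℕ) (hl : 1 ≤ l) (μ : ℝ) (hμ : 0 < μ)
    (Y : Fin l → Ω → ℝ)
    (hYmeas : ∀ i, Measurable (Y i))
    (hYlaw : ∀ i, Measure.map (Y i) P = expMeasure μ)
    (hindep : iIndepFun Y P)
    (θ : ℝ) (hθ : θ ∈ Set.Ioo 0 μ) :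
    mgf (fun ω => ⨆ i, Y i ω) P θ
      = ∏ i ∈ Finset.Icc 1 l, ((i : ℝ) * μ / ((i : ℝ) * μ - θ)) :=
  mgf_max_of_iid_exponentials_general P l hl μ hμ Y hYlaw hindep θ hθ
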